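/- arXiv:2312.11706 — 2 statements merged into one kernel-verified Lean document; each statement's English description precedes it below -/
import Mathlib

section
/- No natural number occurs three or more times as a value of the sequence a; that is, there do not exist natural numbers x < y < z with a(x) = a(y) = a(z). Equivalently, for every n the set {m : a(m) = n} has at most 2 elements. -/
/-- The sequence A105774: `a n = n` for `n ≤ 1`, and
`a n = fib (j+1) - a (n - fib j)` where `j ≥ 2` is the unique index
with `fib j < n ≤ fib (j+1)` (realized as the greatest `j ≤ n` with `fib j < n`). -/
def a (n : ℕ) : ℕ :=
  if _h : n ≤ 1 then n
  else
    Nat.fib (Nat.findGreatest (fun j => Nat.fib j < n) n + 1) -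
      a (n - Nat.fib (Nat.findGreatest (fun j => Nat.fib j < n) n))
decreasing_by
  have h2 : 2 ≤ n := by omega
  have hj : 2 ≤ Nat.findGreatest (fun j => Nat.fib j < n) n :=
    Nat.le_findGreatest h2 (by show Nat.fib 2 < n; simp [Nat.fib_two]; omega)
  have hpos : 0 < Nat.fib (Nat.findGreatest (fun j => Nat.fib j < n) n) :=
    Nat.fib_pos.mpr (by omega)
  omega

/-!
On the Fibonacci block `(F_j, F_{j+1}]` the sequence is `a n = F_{j+1} - a (n - F_j)` with
`n - F_j ∈ [1, F_{j-1}]`. By strong induction `a` maps `[1, F_k]` into `[1, F_k)` for `k ≥ 3`, so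
for `j ≥ 4` its values on the block exceed `F_j`, while its values on `[0, F_j]` stay below `F_j`.
Hence if `a x = a y = a z` with `x < y < z`, all three lie in the block of `z`, where `a n`
determines `a (n - F_j)`; shifting by `F_j` gives a smaller triple with equal values.
-/

open Nat Set

lemma findGreatest_fib_lt_eq {n j : ℕ} (hn : n ∈ Ioc (fib j) (fib (j + 1))) :
    Nat.findGreatest (fun i => fib i < n) n = j := by
  rw [Nat.findGreatest_eq_iff]
  refine ⟨?_, fun _ => hn.1, fun k hjk _ => (hn.2.trans (fib_mono hjk)).not_gt⟩
  have := le_fib_add_one j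
  have := hn.1
  omega

lemma exists_two_le_mem_Ioc_fib {n : ℕ} (hn : 2 ≤ n) :
    ∃ j, 2 ≤ j ∧ n ∈ Ioc (fib j) (fib (j + 1)) := by
  refine ⟨greatestFib (n - 1), le_greatestFib.2 (by simp; omega), ?_, ?_⟩
  · have := fib_greatestFib_le (n - 1)
    omega
  · have := lt_fib_greatestFib_add_one (n - 1)
    omega

lemma sub_fib_mem_Icc {n j : ℕ} (hj : 2 ≤ j) (hn : n ∈ Ioc (fib j) (fib (j + 1))) :
    n - fib j ∈ Icc 1 (fib (j - 1)) := by
  have := fib_add_one (n := j) (by omega)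
  have := hn.1
  have := hn.2
  constructor <;> omega

lemma a_zero : a 0 = 0 := by
  rw [a, dif_pos zero_le_one]

lemma a_one : a 1 = 1 := by
  rw [a, dif_pos le_rfl]

lemma a_of_mem_Ioc {n j : ℕ} (hj : 2 ≤ j) (hn : n ∈ Ioc (fib j) (fib (j + 1))) :
    a n = fib (j + 1) - a (n - fib j) := by
  have : ¬ n ≤ 1 := by
    have := fib_pos.2 (show 0 < j by omega)
    have := hn.1
    omega
  rw [a, dif_neg this, findGreatest_fib_lt_eq hn]

lemma a_two : a 2 = 1 := by
  rw [a_of_mem_Ioc le_rfl (by simp [fib_add_two])]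
  simp [fib_add_two, a_one]

lemma a_three : a 3 = 2 := by
  rw [a_of_mem_Ioc (j := 3) (by norm_num) (by simp [fib_add_two])]
  simp [fib_add_two, a_one]

lemma a_mem_Ico_of_le_fib {n k : ℕ} (hn : 1 ≤ n) (hk : 3 ≤ k) (hnk : n ≤ fib k) :
    a n ∈ Ico 1 (fib k) := by
  induction n using Nat.strong_induction_on generalizing k with
  | _ n ih =>
  obtain rfl | hn2 : n = 1 ∨ 2 ≤ n := by omega
  · rw [a_one]
    exact ⟨le_rfl, (show 1 < fib 3 by simp [fib_add_two]).trans_le (fib_mono hk)⟩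
  obtain ⟨j, hj, hnj⟩ := exists_two_le_mem_Ioc_fib hn2
  obtain ⟨hm1, hm⟩ := sub_fib_mem_Icc hj hnj
  obtain ⟨ham1, ham2⟩ := ih (n - fib j) (sub_lt (by omega) (fib_pos.2 (by omega))) hm1
    (k := j + 1) (by omega) (hm.trans (fib_mono (by omega)))
  have hjk : fib (j + 1) ≤ fib k := fib_mono ((fib_lt_fib hj).1 (hnj.1.trans_le hnk))
  rw [a_of_mem_Ioc hj hnj]
  exact ⟨by omega, by omega⟩

lemma fib_lt_a {n j : ℕ} (hj : 4 ≤ j) (hn : n ∈ Ioc (fib j) (fib (j + 1))) : fib j < a n := by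
  obtain ⟨hm1, hm⟩ := sub_fib_mem_Icc (by omega) hn
  have ham := (a_mem_Ico_of_le_fib hm1 (by omega) hm).2
  have := fib_add_one (n := j) (by omega)
  rw [a_of_mem_Ioc (by omega) hn]
  omega

lemma fib_lt_of_fib_lt_a {n j : ℕ} (hj : 3 ≤ j) (h : fib j < a n) : fib j < n := by
  by_contra! hn
  obtain rfl | hn1 : n = 0 ∨ 1 ≤ n := by omega
  · simp [a_zero] at h
  · exact (a_mem_Ico_of_le_fib hn1 hj hn).2.not_gt h

lemma a_eq_a_iff_of_mem_Ioc {x y j : ℕ} (hj : 2 ≤ j) (hx : x ∈ Ioc (fib j) (fib (j + 1)))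
    (hy : y ∈ Ioc (fib j) (fib (j + 1))) : a x = a y ↔ a (x - fib j) = a (y - fib j) := by
  have hax :=
    (a_mem_Ico_of_le_fib (Nat.sub_pos_of_lt hx.1) (by omega) ((Nat.sub_le _ _).trans hx.2)).2
  have hay :=
    (a_mem_Ico_of_le_fib (Nat.sub_pos_of_lt hy.1) (by omega) ((Nat.sub_le _ _).trans hy.2)).2
  rw [a_of_mem_Ioc hj hx, a_of_mem_Ioc hj hy]
  omega

/-- No natural number occurs three or more times as a value of the sequence `a`:
there do not exist `x < y < z` with `a x = a y = a z`. -/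
theorem a105774_no_value_thrice :
    ¬ ∃ x y z : ℕ, x < y ∧ y < z ∧ a x = a y ∧ a y = a z := by
  rintro ⟨x, y, z, hxy, hyz, hx, hz⟩
  induction z using Nat.strong_induction_on generalizing x y with
  | _ z ih =>
  obtain hz4 | hz4 := lt_or_ge z 4
  · interval_cases z <;> interval_cases y <;> interval_cases x <;>
      simp_all [a_zero, a_one, a_two, a_three]
  obtain ⟨j, hj, hzj⟩ := exists_two_le_mem_Ioc_fib (show 2 ≤ z by omega)
  have hj4 : 4 ≤ j := Nat.lt_add_one_iff.1 <|
    (fib_lt_fib (by norm_num)).1 ((show fib 4 < z by simp [fib_add_two]; omega).trans_le hzj.2)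
  have hxj : x ∈ Ioc (fib j) (fib (j + 1)) :=
    ⟨fib_lt_of_fib_lt_a (by omega) (hx.trans hz ▸ fib_lt_a hj4 hzj),
      (hxy.trans hyz).le.trans hzj.2⟩
  have hyj : y ∈ Ioc (fib j) (fib (j + 1)) := ⟨hxj.1.trans hxy, hyz.le.trans hzj.2⟩
  exact ih (z - fib j) (sub_lt (by omega) (fib_pos.2 (by omega))) (x - fib j) (y - fib j)
    (Nat.sub_lt_sub_right hxj.1.le hxy) (Nat.sub_lt_sub_right hyj.1.le hyz)
    ((a_eq_a_iff_of_mem_Ioc hj hxj hyj).1 hx)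
    ((a_eq_a_iff_of_mem_Ioc hj hyj hzj).1 hz)
end

section
/- Let s(n) = a(F_n). Then: (i) for all integers n ≥ 4, s(n) = s(n−1) + s(n−3) + s(n−4); (ii) for all n ≥ 0, 10·s(n) = L_n + 5·F_n + e_n, where e_n = −2·(−1)^{n/2} if n is even and e_n = 4·(−1)^{(n−1)/2} if n is odd. -/
def lucas : ℕ → ℕ
  | 0 => 2
  | 1 => 1
  | n + 2 => lucas (n + 1) + lucas n

open Nat

def e (n : ℕ) : ℤ :=
  if n % 2 = 0 then -2 * (-1 : ℤ) ^ (n / 2) else 4 * (-1 : ℤ) ^ ((n - 1) / 2)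

theorem e_add_two (n : ℕ) : e (n + 2) = -e n := by
  rcases Nat.mod_two_eq_zero_or_one n with h | h
  · simp only [e, Nat.add_mod_right, h, if_true, show (n + 2) / 2 = n / 2 + 1 by omega, pow_succ]
    ring
  · simp only [e, Nat.add_mod_right, h, one_ne_zero, if_false,
      show (n + 2 - 1) / 2 = (n - 1) / 2 + 1 by omega, pow_succ]
    ring

theorem lucas_add_two_add_lucas : ∀ n, lucas (n + 2) + lucas n = 5 * fib (n + 1)
  | 0 => rfl
  | 1 => rfl
  | n + 2 => by
    have h₀ := lucas_add_two_add_lucas n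
    have h₁ := lucas_add_two_add_lucas (n + 1)
    simp only [lucas, fib_add_two] at *
    omega

theorem a_of_le_one {n : ℕ} (hn : n ≤ 1) : a n = n := by
  rw [a, dif_pos hn]

theorem a_of_fib_lt_of_le_fib {n j : ℕ} (hj : 1 ≤ j) (hlt : fib j < n) (hle : n ≤ fib (j + 1)) :
    a n = fib (j + 1) - a (n - fib j) := by
  have hn : ¬n ≤ 1 := by have := fib_pos.mpr hj; omega
  have hgreatest : Nat.findGreatest (fun k => fib k < n) n = j := by
    refine Nat.findGreatest_eq_iff.mpr ⟨?_, fun _ => hlt, fun k hjk _ => ?_⟩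
    · have := le_fib_add_one j; omega
    · exact not_lt.mpr (hle.trans (fib_mono hjk))
  rw [a, dif_neg hn, hgreatest]

theorem a_fib_add_three (n : ℕ) : a (fib (n + 3)) = fib (n + 3) - a (fib (n + 1)) := by
  rw [a_of_fib_lt_of_le_fib (j := n + 2) (by omega) (fib_lt_fib_succ (by omega)) le_rfl,
    fib_add_two_sub_fib_add_one]

theorem a_fib_le (n : ℕ) : a (fib n) ≤ fib n := by
  match n with
  | 0 | 1 | 2 => exact (a_of_le_one (by decide)).le
  | n + 3 => rw [a_fib_add_three]; exact Nat.sub_le _ _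

theorem a_fib_add_two_add_a_fib : ∀ n, a (fib (n + 2)) + a (fib n) = fib (n + 2)
  | 0 => by simp [a_of_le_one]
  | n + 1 => by
    have hle : a (fib (n + 1)) ≤ fib (n + 1) := a_fib_le (n + 1)
    have hmono : fib (n + 1) ≤ fib (n + 3) := fib_mono (by omega)
    show a (fib (n + 3)) + a (fib (n + 1)) = fib (n + 3)
    rw [a_fib_add_three]
    omega

theorem a_fib_add_four (n : ℕ) :
    a (fib (n + 4)) = a (fib (n + 3)) + a (fib (n + 1)) + a (fib n) := by
  have h₀ : a (fib (n + 2)) + a (fib n) = fib (n + 2) := a_fib_add_two_add_a_fib n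
  have h₁ : a (fib (n + 3)) + a (fib (n + 1)) = fib (n + 3) := a_fib_add_two_add_a_fib (n + 1)
  have h₂ : a (fib (n + 4)) + a (fib (n + 2)) = fib (n + 4) := a_fib_add_two_add_a_fib (n + 2)
  have hfib : fib (n + 4) = fib (n + 2) + fib (n + 3) := fib_add_two
  omega

theorem ten_mul_a_fib : ∀ n, 10 * (a (fib n) : ℤ) = lucas n + 5 * fib n + e n
  | 0 => by simp [a_of_le_one, lucas, e]
  | 1 => by simp [a_of_le_one, lucas, e]
  | n + 2 => by
    have ih := ten_mul_a_fib n
    have hsum : (a (fib (n + 2)) : ℤ) + a (fib n) = fib (n + 2) := by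
      exact_mod_cast a_fib_add_two_add_a_fib n
    have hlucas : (lucas (n + 2) : ℤ) + lucas n = 5 * fib (n + 1) := by
      exact_mod_cast lucas_add_two_add_lucas n
    have hfib : (fib (n + 2) : ℤ) = fib n + fib (n + 1) := by exact_mod_cast fib_add_two
    rw [e_add_two]
    linear_combination 10 * hsum - ih - hlucas + 5 * hfib

/-- With `s n = a (F n)`: (i) `s n = s (n-1) + s (n-3) + s (n-4)` for `n ≥ 4`;
(ii) `10 s n = L n + 5 F n + e n`, where `e n = -2 (-1)^(n/2)` for even `n` and
`e n = 4 (-1)^((n-1)/2)` for odd `n`. -/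
theorem a105774_at_fib (n : ℕ) :
    (4 ≤ n →
      a (Nat.fib n) =
        a (Nat.fib (n - 1)) + a (Nat.fib (n - 3)) + a (Nat.fib (n - 4))) ∧
    10 * (a (Nat.fib n) : ℤ) = lucas n + 5 * Nat.fib n +
      (if n % 2 = 0 then -2 * (-1 : ℤ) ^ (n / 2) else 4 * (-1 : ℤ) ^ ((n - 1) / 2)) := by
  refine ⟨fun hn => ?_, ten_mul_a_fib n⟩
  obtain ⟨m, rfl⟩ := Nat.exists_eq_add_of_le' hn
  simpa using a_fib_add_four m
end
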